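/- Equip T_n = 2^{[n]} ∖ {∅} with the tableau (Gale) order ⊑. Then T_n is a graded poset of rank binom(n+1, 2) − 1; that is, it has a unique minimal element [n] and unique maximal element {n}, and every maximal chain in T_n has exactly binom(n+1, 2) elements. -/

import Mathlib

/-!
Write `c_A(t) = #{a ∈ A | a < t}`. The tableau order is pointwise domination of these counting
functions: `A ⊑ B` iff `c_B ≤ c_A`. Hence `ρ(A) = ∑_{t ≤ n+1} c_A(t)` is a strictly antitone rank
function on `T_n`, with `ρ([n]) = binom(n+1, 2)` and `ρ({n}) = 1`. If `A ⊏ B`, pick `u ∈ A` with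
`u + 1 ∉ A` and `c_B(u+1) < c_A(u+1)`; replacing `u` by `u + 1` (or deleting `u` when `u = n`)
gives `C` with `A ⊑ C ⊑ B` and `ρ(C) = ρ(A) - 1`. So a maximal chain, on which `ρ` is injective,
takes every value in `[1, binom(n+1, 2)]` exactly once.
-/

/-- The `k`-th smallest element of a finite set of naturals (0-indexed). -/
def nthSmall (A : Finset ℕ) (k : ℕ) : ℕ := (A.sort (· ≤ ·)).getD k 0

/-- The tableau (Gale) order on finite sets of naturals. -/
def galeLe (A B : Finset ℕ) : Prop :=
  B.card ≤ A.card ∧ ∀ k < B.card, nthSmall A k ≤ nthSmall B k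

/-- A chain in the poset `T_n` of nonempty subsets of `[n]` under the tableau order. -/
def IsGaleChain (n : ℕ) (𝒞 : Finset (Finset ℕ)) : Prop :=
  (∀ A ∈ 𝒞, A.Nonempty ∧ A ⊆ Finset.Icc 1 n) ∧
    ∀ A ∈ 𝒞, ∀ B ∈ 𝒞, galeLe A B ∨ galeLe B A

/-- A maximal chain in `T_n`. -/
def IsMaximalGaleChain (n : ℕ) (𝒞 : Finset (Finset ℕ)) : Prop :=
  IsGaleChain n 𝒞 ∧ ∀ 𝒟 : Finset (Finset ℕ), IsGaleChain n 𝒟 → 𝒞 ⊆ 𝒟 → 𝒟 = 𝒞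

open Finset Nat

theorem count_mem_eq_card_filter_lt (A : Finset ℕ) (t : ℕ) :
    count (· ∈ A) t = #{a ∈ A | a < t} := by
  rw [count_eq_card_filter_range]
  congr 1
  ext a
  simp [and_comm]

theorem count_mem_le_card (A : Finset ℕ) (t : ℕ) : count (· ∈ A) t ≤ #A := by
  rw [count_mem_eq_card_filter_lt]
  exact card_filter_le _ _

theorem count_mem_eq_card_of_le {A : Finset ℕ} {n t : ℕ} (hA : ∀ a ∈ A, a ≤ n) (ht : n < t) :
    count (· ∈ A) t = #A := by
  rw [count_mem_eq_card_filter_lt, filter_true_of_mem fun a ha => (hA a ha).trans_lt ht]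

theorem ext_count {A B : Finset ℕ} (h : ∀ t, count (· ∈ A) t = count (· ∈ B) t) : A = B := by
  ext a
  rw [← count_lt_count_succ_iff (p := (· ∈ A)), ← count_lt_count_succ_iff (p := (· ∈ B)), h, h]

theorem count_mem_insert {A : Finset ℕ} {a : ℕ} (ha : a ∉ A) (t : ℕ) :
    count (· ∈ insert a A) t = count (· ∈ A) t + if a < t then 1 else 0 := by
  simp only [count_mem_eq_card_filter_lt, filter_insert]
  split_ifs
  · exact card_insert_of_notMem fun h => ha (mem_filter.1 h).1
  · rfl

theorem count_mem_erase_add {A : Finset ℕ} {a : ℕ} (ha : a ∈ A) (t : ℕ) :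
    count (· ∈ A.erase a) t + (if a < t then 1 else 0) = count (· ∈ A) t := by
  conv_rhs => rw [← insert_erase ha]
  rw [count_mem_insert (notMem_erase a A)]

theorem count_mem_insert_succ_erase_add {A : Finset ℕ} {u : ℕ} (hu : u ∈ A) (hu1 : u + 1 ∉ A)
    (t : ℕ) :
    count (· ∈ insert (u + 1) (A.erase u)) t + (if t = u + 1 then 1 else 0) =
      count (· ∈ A) t := by
  rw [count_mem_insert (fun h => hu1 (mem_of_mem_erase h)), ← count_mem_erase_add hu t]
  split_ifs <;> omega

theorem nthSmall_eq_nth (A : Finset ℕ) (k : ℕ) : nthSmall A k = nth (· ∈ A) k := by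
  rw [nth_eq_getD_sort (p := (· ∈ A)) A.finite_toSet]
  simp [nthSmall]

theorem nthSmall_lt_iff_lt_count {A : Finset ℕ} {k : ℕ} (hk : k < #A) (t : ℕ) :
    nthSmall A k < t ↔ k < count (· ∈ A) t := by
  have hk' : k < #(A.finite_toSet (α := ℕ)).toFinset := by simpa using hk
  refine ⟨fun h => ?_, fun h => nthSmall_eq_nth A k ▸ nth_lt_of_lt_count h⟩
  rw [nthSmall_eq_nth] at h
  calc k = count (· ∈ A) (nth (· ∈ A) k) := (count_nth_of_lt_card_finite _ hk').symm
    _ < count (· ∈ A) (nth (· ∈ A) k + 1) :=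
        count_lt_count_succ_iff.2 (nth_mem_of_lt_card _ hk')
    _ ≤ count (· ∈ A) t := count_monotone _ h

theorem galeLe_iff_count_le {A B : Finset ℕ} :
    galeLe A B ↔ ∀ t, count (· ∈ B) t ≤ count (· ∈ A) t := by
  constructor
  · rintro ⟨hcard, hle⟩ t
    rcases Nat.eq_zero_or_pos (count (· ∈ B) t) with hzero | hpos
    · simp [hzero]
    obtain ⟨i, hi⟩ := Nat.exists_eq_add_one.2 hpos
    have hiB : i < #B := by have := count_mem_le_card B t; omega
    have hB : nthSmall B i < t := (nthSmall_lt_iff_lt_count hiB t).2 (by omega)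
    have hA := (nthSmall_lt_iff_lt_count (hiB.trans_le hcard) t).1 ((hle i hiB).trans_lt hB)
    omega
  · intro h
    have hcard : #B ≤ #A :=
      calc #B = count (· ∈ B) (B.sup id + 1) :=
            (count_mem_eq_card_of_le (fun b hb => le_sup (f := id) hb) (lt_add_one _)).symm
        _ ≤ count (· ∈ A) (B.sup id + 1) := h _
        _ ≤ #A := count_mem_le_card A _
    refine ⟨hcard, fun k hk => Nat.lt_succ_iff.1 ?_⟩
    rw [nthSmall_lt_iff_lt_count (hk.trans_le hcard)]
    exact ((nthSmall_lt_iff_lt_count hk _).1 (lt_add_one _)).trans_le (h _)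

theorem galeLe_refl (A : Finset ℕ) : galeLe A A := ⟨le_rfl, fun _ _ => le_rfl⟩

theorem galeLe_trans {A B C : Finset ℕ} (hAB : galeLe A B) (hBC : galeLe B C) : galeLe A C := by
  rw [galeLe_iff_count_le] at *
  exact fun t => (hBC t).trans (hAB t)

theorem Icc_galeLe {n : ℕ} {A : Finset ℕ} (hA : A ⊆ Icc 1 n) : galeLe (Icc 1 n) A :=
  galeLe_iff_count_le.2 fun t => by
    simp only [count_mem_eq_card_filter_lt]
    exact card_le_card (filter_subset_filter _ hA)

theorem galeLe_singleton {n : ℕ} {A : Finset ℕ} (hA : A.Nonempty) (hAn : ∀ a ∈ A, a ≤ n) :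
    galeLe A {n} :=
  galeLe_iff_count_le.2 fun t => by
    obtain ⟨a, ha⟩ := hA
    simp only [count_mem_eq_card_filter_lt, filter_singleton]
    split_ifs with ht
    · exact card_pos.2 ⟨a, mem_filter.2 ⟨ha, (hAn a ha).trans_lt ht⟩⟩
    · exact Nat.zero_le _

theorem exists_mem_succ_notMem_count_lt {A B : Finset ℕ} (hAB : galeLe A B) (hne : A ≠ B) :
    ∃ u ∈ A, u + 1 ∉ A ∧ count (· ∈ B) (u + 1) < count (· ∈ A) (u + 1) := by
  rw [galeLe_iff_count_le] at hAB
  have hex : ∃ t, count (· ∈ B) t < count (· ∈ A) t := by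
    by_contra! h
    exact hne (ext_count fun t => le_antisymm (h t) (hAB t))
  obtain ⟨v, hv⟩ : ∃ v, Nat.find hex = v + 1 :=
    Nat.exists_eq_add_one.2 (Nat.pos_of_ne_zero fun h0 => by simpa [h0] using Nat.find_spec hex)
  have hv_lt : count (· ∈ B) (v + 1) < count (· ∈ A) (v + 1) := hv ▸ Nat.find_spec hex
  have hvA : v ∈ A := by
    have hv_ge : ¬count (· ∈ B) v < count (· ∈ A) v := Nat.find_min hex (by omega)
    have := count_monotone (· ∈ B) (Nat.le_add_right v 1)
    have := hAB v
    rw [← count_lt_count_succ_iff (p := (· ∈ A))]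
    omega
  -- Membership in `S` propagates along runs of `A`, so the largest element of `S` ends a run.
  set S := {u ∈ A | count (· ∈ B) (u + 1) < count (· ∈ A) (u + 1)}
  have hS : S.Nonempty := ⟨v, mem_filter.2 ⟨hvA, hv_lt⟩⟩
  obtain ⟨huA, hu⟩ := mem_filter.1 (S.max'_mem hS)
  refine ⟨S.max' hS, huA, fun hu1 => ?_, hu⟩
  have hu1S : S.max' hS + 1 ∈ S := by
    refine mem_filter.2 ⟨hu1, ?_⟩
    rw [count_succ, count_succ (· ∈ A), if_pos hu1]
    split_ifs <;> omega
  exact absurd (S.le_max' _ hu1S) (by omega)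

/-- The last term, `count (· ∈ A) (n + 1) = #A`, is what tells `A` apart from `A.erase n`. -/
def galeRank (n : ℕ) (A : Finset ℕ) : ℕ := ∑ t ∈ range (n + 2), count (· ∈ A) t

theorem galeRank_le_of_galeLe {n : ℕ} {A B : Finset ℕ} (h : galeLe A B) :
    galeRank n B ≤ galeRank n A :=
  sum_le_sum fun t _ => galeLe_iff_count_le.1 h t

theorem galeRank_lt_of_galeLe {n : ℕ} {A B : Finset ℕ} (hA : ∀ a ∈ A, a ≤ n)
    (hB : ∀ b ∈ B, b ≤ n) (h : galeLe A B) (hne : A ≠ B) : galeRank n B < galeRank n A := by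
  rw [galeLe_iff_count_le] at h
  refine sum_lt_sum (fun t _ => h t) ?_
  by_contra! heq
  refine hne (ext_count fun t => le_antisymm ?_ (h t))
  rcases Nat.lt_or_ge t (n + 2) with ht | ht
  · exact heq t (mem_range.2 ht)
  · rw [count_mem_eq_card_of_le hA (by omega : n < t), count_mem_eq_card_of_le hB (by omega),
      ← count_mem_eq_card_of_le hA (lt_add_one n), ← count_mem_eq_card_of_le hB (lt_add_one n)]
    exact heq (n + 1) (by simp)

theorem galeRank_Icc (n : ℕ) : galeRank n (Icc 1 n) = (n + 1).choose 2 := by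
  have hcount : ∀ t < n + 1, count (· ∈ Icc 1 n) (t + 1) = t := fun t ht => by
    have hfilter : {a ∈ Icc 1 n | a < t + 1} = Icc 1 t := by
      ext a
      simp only [mem_filter, mem_Icc]
      omega
    rw [count_mem_eq_card_filter_lt, hfilter, Nat.card_Icc, Nat.add_sub_cancel]
  rw [galeRank, sum_range_succ', count_zero, add_zero,
    sum_congr rfl fun t ht => hcount t (mem_range.1 ht), sum_range_id, choose_two_right]

theorem galeRank_singleton (n : ℕ) : galeRank n {n} = 1 := by
  have hzero : ∀ t < n + 1, count (· ∈ ({n} : Finset ℕ)) t = 0 := fun t ht =>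
    count_iff_forall_not.2 fun m hm => by simp only [mem_singleton]; omega
  rw [galeRank, sum_range_succ, sum_eq_zero fun t ht => hzero t (mem_range.1 ht),
    count_mem_eq_card_of_le (n := n) (by simp) (lt_add_one n), card_singleton, zero_add]

theorem galeRank_add_one_of_count {n u : ℕ} {A C : Finset ℕ} (hu : u ≤ n)
    (h : ∀ t < n + 2, count (· ∈ C) t + (if t = u + 1 then 1 else 0) = count (· ∈ A) t) :
    galeRank n C + 1 = galeRank n A := by
  rw [galeRank, galeRank, ← sum_congr rfl fun t ht => h t (mem_range.1 ht), sum_add_distrib,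
    sum_ite_eq' (range (n + 2)) (u + 1), if_pos (mem_range.2 (by omega))]

theorem galeLe_erase {A : Finset ℕ} {a : ℕ} (ha : a ∈ A) : galeLe A (A.erase a) :=
  galeLe_iff_count_le.2 fun t => by
    have := count_mem_erase_add ha t
    omega

theorem erase_galeLe {A B : Finset ℕ} {u : ℕ} (hA : ∀ a ∈ A, a ≤ u) (hB : ∀ b ∈ B, b ≤ u)
    (hu : u ∈ A) (hAB : galeLe A B) (hcard : #B < #A) : galeLe (A.erase u) B := by
  rw [galeLe_iff_count_le] at *
  intro t
  have hC := count_mem_erase_add hu t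
  by_cases ht : u < t
  · rw [if_pos ht, count_mem_eq_card_of_le hA ht] at hC
    rw [count_mem_eq_card_of_le hB ht]
    omega
  · rw [if_neg ht, add_zero] at hC
    exact hC ▸ hAB t

theorem galeLe_insert_succ_erase {A : Finset ℕ} {u : ℕ} (hu : u ∈ A) (hu1 : u + 1 ∉ A) :
    galeLe A (insert (u + 1) (A.erase u)) :=
  galeLe_iff_count_le.2 fun t => by
    have := count_mem_insert_succ_erase_add hu hu1 t
    omega

theorem insert_succ_erase_galeLe {A B : Finset ℕ} {u : ℕ} (hu : u ∈ A) (hu1 : u + 1 ∉ A)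
    (hAB : galeLe A B) (hlt : count (· ∈ B) (u + 1) < count (· ∈ A) (u + 1)) :
    galeLe (insert (u + 1) (A.erase u)) B := by
  rw [galeLe_iff_count_le] at *
  intro t
  have hC := count_mem_insert_succ_erase_add hu hu1 t
  split_ifs at hC with ht
  · subst ht
    omega
  · rw [add_zero] at hC
    exact hC ▸ hAB t

theorem exists_galeLe_galeLe_galeRank_add_one {n : ℕ} {A B : Finset ℕ} (hA : A ⊆ Icc 1 n)
    (hB : B.Nonempty) (hBn : B ⊆ Icc 1 n) (hAB : galeLe A B) (hne : A ≠ B) :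
    ∃ C, C.Nonempty ∧ C ⊆ Icc 1 n ∧ galeLe A C ∧ galeLe C B ∧
      galeRank n C + 1 = galeRank n A := by
  obtain ⟨u, huA, hu1, hlt⟩ := exists_mem_succ_notMem_count_lt hAB hne
  have hAle : ∀ a ∈ A, a ≤ n := fun a ha => (mem_Icc.1 (hA ha)).2
  have hBle : ∀ b ∈ B, b ≤ n := fun b hb => (mem_Icc.1 (hBn hb)).2
  rcases (hAle u huA).lt_or_eq with hun | rfl
  · exact ⟨insert (u + 1) (A.erase u), insert_nonempty _ _,
      insert_subset (mem_Icc.2 ⟨by omega, hun⟩) ((erase_subset u A).trans hA),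
      galeLe_insert_succ_erase huA hu1, insert_succ_erase_galeLe huA hu1 hAB hlt,
      galeRank_add_one_of_count hun.le fun t _ => count_mem_insert_succ_erase_add huA hu1 t⟩
  · rw [count_mem_eq_card_of_le hAle (lt_add_one u), count_mem_eq_card_of_le hBle (lt_add_one u)]
      at hlt
    refine ⟨A.erase u, ?_, (erase_subset u A).trans hA, galeLe_erase huA,
      erase_galeLe hAle hBle huA hAB hlt, galeRank_add_one_of_count le_rfl fun t ht => ?_⟩
    · rw [← card_pos, card_erase_of_mem huA]
      have := hB.card_pos
      omega
    · have := count_mem_erase_add huA t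
      split_ifs at this ⊢ <;> omega

namespace IsGaleChain

variable {n : ℕ} {𝒞 : Finset (Finset ℕ)} {A B : Finset ℕ}

theorem le_of_mem (h : IsGaleChain n 𝒞) (hA : A ∈ 𝒞) : ∀ a ∈ A, a ≤ n :=
  fun _ ha => (mem_Icc.1 ((h.1 A hA).2 ha)).2

theorem injOn_galeRank (h : IsGaleChain n 𝒞) : Set.InjOn (galeRank n) 𝒞 := by
  intro A hA B hB hAB
  by_contra hne
  rcases h.2 A hA B hB with hle | hle
  · exact (galeRank_lt_of_galeLe (h.le_of_mem hA) (h.le_of_mem hB) hle hne).ne hAB.symm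
  · exact (galeRank_lt_of_galeLe (h.le_of_mem hB) (h.le_of_mem hA) hle (Ne.symm hne)).ne hAB

theorem galeLe_of_galeRank_le (h : IsGaleChain n 𝒞) (hA : A ∈ 𝒞) (hB : B ∈ 𝒞)
    (hle : galeRank n B ≤ galeRank n A) : galeLe A B := by
  rcases h.2 A hA B hB with hAB | hBA
  · exact hAB
  · have := galeRank_le_of_galeLe (n := n) hBA
    rw [h.injOn_galeRank hA hB (by omega)]
    exact galeLe_refl B

end IsGaleChain

namespace IsMaximalGaleChain

variable {n : ℕ} {𝒞 : Finset (Finset ℕ)} {A B X : Finset ℕ}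

theorem mem_of_forall_comparable (h : IsMaximalGaleChain n 𝒞) (hX : X.Nonempty)
    (hXn : X ⊆ Icc 1 n) (hcomp : ∀ Y ∈ 𝒞, galeLe X Y ∨ galeLe Y X) : X ∈ 𝒞 := by
  have hchain : IsGaleChain n (insert X 𝒞) := by
    refine ⟨fun A hA => ?_, fun A hA B hB => ?_⟩
    · rcases mem_insert.1 hA with rfl | hA
      exacts [⟨hX, hXn⟩, h.1.1 A hA]
    · rcases mem_insert.1 hA with rfl | hA' <;> rcases mem_insert.1 hB with rfl | hB'
      exacts [Or.inl (galeLe_refl _), hcomp B hB', (hcomp A hA').symm, h.1.2 A hA' B hB']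
  rw [← h.2 _ hchain (subset_insert X 𝒞)]
  exact mem_insert_self X 𝒞

theorem exists_galeRank_between (h : IsMaximalGaleChain n 𝒞) (hA : A ∈ 𝒞) (hB : B ∈ 𝒞)
    (hAB : galeRank n B + 1 < galeRank n A) :
    ∃ Y ∈ 𝒞, galeRank n B < galeRank n Y ∧ galeRank n Y < galeRank n A := by
  by_contra! hgap
  obtain ⟨C, hC, hCn, hAC, hCB, hrank⟩ :=
    exists_galeLe_galeLe_galeRank_add_one (h.1.1 A hA).2 (h.1.1 B hB).1 (h.1.1 B hB).2
      (h.1.galeLe_of_galeRank_le hA hB (by omega)) (by rintro rfl; omega)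
  -- Nothing of `𝒞` has rank strictly between `B` and `A`, so `C` is comparable with all of `𝒞`.
  have hC𝒞 : C ∈ 𝒞 := h.mem_of_forall_comparable hC hCn fun Y hY => by
    rcases le_or_gt (galeRank n A) (galeRank n Y) with hAY | hYA
    · exact Or.inr (galeLe_trans (h.1.galeLe_of_galeRank_le hY hA hAY) hAC)
    · have hYB : galeRank n Y ≤ galeRank n B := by
        by_contra! hBY
        exact (hgap Y hY hBY).not_gt hYA
      exact Or.inl (galeLe_trans hCB (h.1.galeLe_of_galeRank_le hB hY hYB))
  exact (hgap C hC𝒞 (by omega)).not_gt (by omega)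

theorem image_galeRank (h : IsMaximalGaleChain n 𝒞) (hn : 1 ≤ n) :
    𝒞.image (galeRank n) = Icc 1 ((n + 1).choose 2) := by
  have hbot : Icc 1 n ∈ 𝒞 := h.mem_of_forall_comparable (nonempty_Icc.2 hn) Subset.rfl
    fun Y hY => Or.inl (Icc_galeLe (h.1.1 Y hY).2)
  have htop : {n} ∈ 𝒞 := h.mem_of_forall_comparable (singleton_nonempty n)
    (singleton_subset_iff.2 (mem_Icc.2 ⟨hn, le_rfl⟩))
    fun Y hY => Or.inr (galeLe_singleton (h.1.1 Y hY).1 (h.1.le_of_mem hY))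
  refine Subset.antisymm (image_subset_iff.2 fun X hX => mem_Icc.2 ⟨?_, ?_⟩) fun r hr => ?_
  · exact galeRank_singleton n ▸
      galeRank_le_of_galeLe (galeLe_singleton (h.1.1 X hX).1 (h.1.le_of_mem hX))
  · exact galeRank_Icc n ▸ galeRank_le_of_galeLe (Icc_galeLe (h.1.1 X hX).2)
  by_contra hr𝒞
  have hne : ∀ Y ∈ 𝒞, galeRank n Y ≠ r := fun Y hY hYr => hr𝒞 (mem_image.2 ⟨Y, hY, hYr⟩)
  obtain ⟨hr1, hrN⟩ := mem_Icc.1 hr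
  obtain ⟨A, hA, hAmin⟩ := exists_min_image {Y ∈ 𝒞 | r < galeRank n Y} (galeRank n)
    ⟨Icc 1 n, mem_filter.2 ⟨hbot, (galeRank_Icc n ▸ hrN).lt_of_ne' (hne _ hbot)⟩⟩
  obtain ⟨B, hB, hBmax⟩ := exists_max_image {Y ∈ 𝒞 | galeRank n Y < r} (galeRank n)
    ⟨{n}, mem_filter.2 ⟨htop, (galeRank_singleton n ▸ hr1).lt_of_ne (hne _ htop)⟩⟩
  rw [mem_filter] at hA hB
  obtain ⟨Y, hY, hBY, hYA⟩ := h.exists_galeRank_between hA.1 hB.1 (by omega)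
  rcases (hne Y hY).lt_or_gt with hYr | hYr
  · exact (hBmax Y (mem_filter.2 ⟨hY, hYr⟩)).not_gt hBY
  · exact (hAmin Y (mem_filter.2 ⟨hY, hYr⟩)).not_gt hYA

end IsMaximalGaleChain

/-- `T_n` is a graded poset of rank `binom(n+1,2) − 1`: it has `[n]`
as unique bottom element and `{n}` as unique top element, and every maximal chain has
exactly `binom(n+1,2)` elements. -/
theorem stmt_7 (n : ℕ) (hn : 1 ≤ n) :
    (∀ A : Finset ℕ, A.Nonempty → A ⊆ Finset.Icc 1 n →
      galeLe (Finset.Icc 1 n) A ∧ galeLe A {n}) ∧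
    ∀ 𝒞 : Finset (Finset ℕ), IsMaximalGaleChain n 𝒞 → 𝒞.card = (n + 1).choose 2 := by
  refine ⟨fun A hA hAn => ⟨Icc_galeLe hAn, galeLe_singleton hA fun a ha => (mem_Icc.1 (hAn ha)).2⟩,
    fun 𝒞 h𝒞 => ?_⟩
  rw [← Finset.card_image_of_injOn h𝒞.1.injOn_galeRank, h𝒞.image_galeRank hn, Nat.card_Icc,
    Nat.add_sub_cancel]
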